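/- For n ≥ 0, the sum Σ_{(λ,μ)} (dim_Θ(λ,μ))² over all pairs of Young diagrams with 2|λ|+|μ| = n equals Σ_{l ≡ n mod 2, 0 ≤ l ≤ n} (n!)² / (2^{n−l} · l! · ((n−l)/2)!). -/

import Mathlib

/-!
Young's lattice is a 1-differential poset: for diagrams μ, κ of the same size, the number of
diagrams covering both equals the number covered by both, plus one when μ = κ. For μ ≠ κ this is
modularity of `card` (both numbers are 1 exactly when |μ ⊔ κ| = |μ| + 1); for μ = κ it says that a
diagram has one more addable than removable corner, as addable rows are row 0 and the rows just
below removable ones. Counting up-down paths then gives Σ_{ν ⋗ μ} f ν = (|μ| + 1) f μ, hence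
Σ_{|μ| = m} (f μ)² = m!. With this, the k-th level of the sum of (dim_Θ)² factors as
(n!)² / (2^{2k} k! (n - 2k)!), and l = n - 2k is the index on the right-hand side.
-/

open Finset
open scoped Nat

theorem card_commonUpperCovers_eq_card_commonLowerCovers {α : Type*} [Lattice α] {r : α → ℕ}
    (hr : StrictMono r) (hmod : ∀ a b, r (a ⊔ b) + r (a ⊓ b) = r a + r b) {a b : α}
    (hab : a ≠ b) (hrab : r a = r b) {U D : Finset α}
    (hU : ∀ c, c ∈ U ↔ (a ≤ c ∧ r c = r a + 1) ∧ (b ≤ c ∧ r c = r b + 1))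
    (hD : ∀ d, d ∈ D ↔ (d ≤ a ∧ r a = r d + 1) ∧ (d ≤ b ∧ r b = r d + 1)) :
    #U = #D := by
  have eq_of_le : ∀ {x y : α}, x ≤ y → r y ≤ r x → x = y := fun hxy h =>
    hxy.eq_of_not_lt fun hlt => (hr hlt).not_ge h
  have hsup : r a < r (a ⊔ b) := (hr.monotone le_sup_left).lt_of_ne fun h =>
    hab (eq_of_le (sup_eq_left.1 (eq_of_le le_sup_left h.ge).symm) hrab.le).symm
  have hinf : r (a ⊓ b) < r a := (hr.monotone inf_le_left).lt_of_ne fun h =>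
    hab (eq_of_le (inf_eq_left.1 (eq_of_le inf_le_left h.ge)) hrab.ge)
  have hU' : U = ({a ⊔ b} : Finset α).filter (fun c => r c = r a + 1) := by
    ext c
    rw [hU, mem_filter, mem_singleton]
    constructor
    · rintro ⟨⟨hac, hc⟩, hbc, -⟩
      exact ⟨(eq_of_le (sup_le hac hbc) (by omega)).symm, hc⟩
    · rintro ⟨rfl, hc⟩
      exact ⟨⟨le_sup_left, hc⟩, le_sup_right, hrab ▸ hc⟩
  have hD' : D = ({a ⊓ b} : Finset α).filter (fun d => r a = r d + 1) := by
    ext d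
    rw [hD, mem_filter, mem_singleton]
    constructor
    · rintro ⟨⟨hda, hd⟩, hdb, -⟩
      exact ⟨eq_of_le (le_inf hda hdb) (by omega), hd⟩
    · rintro ⟨rfl, hd⟩
      exact ⟨⟨inf_le_left, hd⟩, inf_le_right, hrab ▸ hd⟩
  have := hmod a b
  rw [hU', hD', filter_singleton, filter_singleton]
  split_ifs <;> simp <;> omega

namespace DifferentialPoset

variable {α : Type*} [DecidableEq α] {r : α → ℕ} {level : ℕ → Finset α} {below : α → Finset α}

variable (r level below) in
def up (a : α) : Finset α := (level (r a + 1)).filter fun b => a ∈ below b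

variable (r level below) in
def IsDifferential : Prop :=
  ∀ a b, r a = r b →
    #(up r level below a ∩ up r level below b) = #(below a ∩ below b) + if a = b then 1 else 0

theorem mem_up (hlevel : ∀ m a, a ∈ level m ↔ r a = m)
    (hbelow : ∀ a b, b ∈ below a → r a = r b + 1) {a b : α} :
    b ∈ up r level below a ↔ a ∈ below b := by
  rw [up, mem_filter, hlevel]
  exact ⟨And.right, fun h => ⟨hbelow b a h, h⟩⟩

theorem sum_up_sum_below (hlevel : ∀ m a, a ∈ level m ↔ r a = m)
    (hbelow : ∀ a b, b ∈ below a → r a = r b + 1) (f : α → ℕ) (a : α) :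
    ∑ b ∈ up r level below a, ∑ c ∈ below b, f c =
      ∑ c ∈ level (r a), #(up r level below a ∩ up r level below c) * f c := by
  rw [sum_comm' (t' := level (r a)) (s' := fun c => up r level below a ∩ up r level below c)]
  · simp only [sum_const, smul_eq_mul]
  · intro b c
    simp only [mem_inter, mem_up hlevel hbelow, hlevel]
    constructor
    · rintro ⟨hab, hcb⟩
      exact ⟨⟨hab, hcb⟩, by have := hbelow b c hcb; have := hbelow b a hab; omega⟩
    · exact And.left

theorem sum_below_sum_up (hlevel : ∀ m a, a ∈ level m ↔ r a = m)
    (hbelow : ∀ a b, b ∈ below a → r a = r b + 1) (f : α → ℕ) (a : α) :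
    ∑ b ∈ below a, ∑ c ∈ up r level below b, f c =
      ∑ c ∈ level (r a), #(below a ∩ below c) * f c := by
  rw [sum_comm' (t' := level (r a)) (s' := fun c => below a ∩ below c)]
  · simp only [sum_const, smul_eq_mul]
  · intro b c
    simp only [mem_inter, mem_up hlevel hbelow, hlevel]
    constructor
    · rintro ⟨hba, hbc⟩
      exact ⟨⟨hba, hbc⟩, by have := hbelow c b hbc; have := hbelow a b hba; omega⟩
    · exact And.left

theorem sum_up_eq (hlevel : ∀ m a, a ∈ level m ↔ r a = m)
    (hbelow : ∀ a b, b ∈ below a → r a = r b + 1) (hdiff : IsDifferential r level below)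
    {f : α → ℕ} (hf : ∀ a, 0 < r a → f a = ∑ b ∈ below a, f b) (a : α) :
    ∑ b ∈ up r level below a, f b = (r a + 1) * f a := by
  induction hm : r a using Nat.strong_induction_on generalizing a with
  | _ m ih =>
  subst hm
  calc ∑ b ∈ up r level below a, f b
      = ∑ b ∈ up r level below a, ∑ c ∈ below b, f c :=
        sum_congr rfl fun b hb => hf b (by have := hbelow b a ((mem_up hlevel hbelow).1 hb); omega)
    _ = ∑ c ∈ level (r a), (#(below a ∩ below c) * f c + if a = c then f c else 0) := by
        rw [sum_up_sum_below hlevel hbelow]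
        refine sum_congr rfl fun c hc => ?_
        rw [hdiff a c ((hlevel _ c).1 hc).symm]
        split_ifs <;> ring
    _ = ∑ b ∈ below a, ∑ c ∈ up r level below b, f c + f a := by
        rw [sum_add_distrib, sum_below_sum_up hlevel hbelow, sum_ite_eq,
          if_pos ((hlevel _ a).2 rfl)]
    _ = ∑ b ∈ below a, r a * f b + f a := by
        congr 1
        refine sum_congr rfl fun b hb => ?_
        have := hbelow a b hb
        rw [ih (r b) (by omega) b rfl, ← this]
    _ = (r a + 1) * f a := by
        rw [← mul_sum]
        rcases (r a).eq_zero_or_pos with h | h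
        · simp [h]
        · rw [← hf a h]
          ring

theorem sum_level_sq (hlevel : ∀ m a, a ∈ level m ↔ r a = m)
    (hbelow : ∀ a b, b ∈ below a → r a = r b + 1) (hdiff : IsDifferential r level below)
    {f : α → ℕ} (hf : ∀ a, 0 < r a → f a = ∑ b ∈ below a, f b) (m : ℕ) :
    ∑ a ∈ level m, f a ^ 2 = m ! * ∑ a ∈ level 0, f a ^ 2 := by
  induction m with
  | zero => simp
  | succ m ih =>
    calc ∑ b ∈ level (m + 1), f b ^ 2
        = ∑ b ∈ level (m + 1), ∑ a ∈ below b, f a * f b := by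
          refine sum_congr rfl fun b hb => ?_
          rw [← sum_mul, ← hf b (by rw [(hlevel _ b).1 hb]; omega), sq]
      _ = ∑ a ∈ level m, ∑ b ∈ up r level below a, f a * f b := by
          refine sum_comm' fun b a => ?_
          rw [mem_up hlevel hbelow, hlevel, hlevel]
          constructor
          · rintro ⟨hb, ha⟩
            exact ⟨ha, by have := hbelow b a ha; omega⟩
          · rintro ⟨ha, rfl⟩
            exact ⟨hbelow b a ha, ha⟩
      _ = (m + 1) * ∑ a ∈ level m, f a ^ 2 := by
          rw [mul_sum]
          refine sum_congr rfl fun a ha => ?_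
          rw [← mul_sum, sum_up_eq hlevel hbelow hdiff hf, (hlevel m a).1 ha]
          ring
      _ = (m + 1)! * ∑ a ∈ level 0, f a ^ 2 := by
          rw [ih, Nat.factorial_succ, mul_assoc]

end DifferentialPoset

namespace YoungDiagram

instance : DecidableEq YoungDiagram := fun _ _ => decidable_of_iff _ YoungDiagram.ext_iff.symm

theorem card_bot : (⊥ : YoungDiagram).card = 0 := by
  simp [YoungDiagram.card, cells_bot]

theorem card_eq_zero_iff {μ : YoungDiagram} : μ.card = 0 ↔ μ = ⊥ := by
  rw [YoungDiagram.card, card_eq_zero, ← cells_bot, ← YoungDiagram.ext_iff]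

theorem card_strictMono : StrictMono YoungDiagram.card := fun _ _ h =>
  card_lt_card (cells_ssubset_iff.2 h)

theorem card_sup_add_card_inf (μ ν : YoungDiagram) :
    (μ ⊔ ν).card + (μ ⊓ ν).card = μ.card + ν.card := by
  simp only [YoungDiagram.card, cells_sup, cells_inf, card_union_add_card_inter]

theorem pos_rowLen_iff {μ : YoungDiagram} {i : ℕ} : 0 < μ.rowLen i ↔ i < μ.colLen 0 := by
  rw [← mem_iff_lt_rowLen, mem_iff_lt_colLen]

def addableRows (μ : YoungDiagram) : Finset ℕ :=
  (range (μ.colLen 0 + 1)).filter fun i => i = 0 ∨ μ.rowLen i < μ.rowLen (i - 1)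

def removableRows (μ : YoungDiagram) : Finset ℕ :=
  (range (μ.colLen 0)).filter fun i => μ.rowLen (i + 1) < μ.rowLen i

theorem mem_addableRows {μ : YoungDiagram} {i : ℕ} :
    i ∈ μ.addableRows ↔ i = 0 ∨ μ.rowLen i < μ.rowLen (i - 1) := by
  rw [addableRows, mem_filter, mem_range, and_iff_right_iff_imp]
  rintro (rfl | h)
  · omega
  · have := pos_rowLen_iff.1 (by omega : 0 < μ.rowLen (i - 1))
    omega

theorem mem_removableRows {μ : YoungDiagram} {i : ℕ} :
    i ∈ μ.removableRows ↔ μ.rowLen (i + 1) < μ.rowLen i := by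
  rw [removableRows, mem_filter, mem_range, and_iff_right_iff_imp]
  exact fun h => pos_rowLen_iff.1 (by omega)

theorem card_addableRows (μ : YoungDiagram) :
    #μ.addableRows = #μ.removableRows + 1 := by
  have : μ.addableRows = insert 0 (μ.removableRows.image (· + 1)) := by
    ext i
    rcases i with _ | i <;> simp [mem_addableRows, mem_removableRows]
  rw [this, card_insert_of_notMem (by simp), card_image_of_injective _ (add_left_injective 1)]

/-- Adds the cells `(a, μ.rowLen i)` with `a ≤ i`: a lower set for every `i`, and the single
cell `(i, μ.rowLen i)` when row `i` is addable. -/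
def addCell (μ : YoungDiagram) (i : ℕ) : YoungDiagram where
  cells := μ.cells ∪ (range (i + 1)).image fun a => (a, μ.rowLen i)
  isLowerSet := by
    rintro ⟨c, d⟩ ⟨x, y⟩ ⟨hx, hy⟩ hcd
    simp only [coe_union, Set.mem_union, mem_coe, coe_image, Set.mem_image, mem_range,
      Prod.mk.injEq, mem_cells] at hcd ⊢
    rcases hcd with h | ⟨a, ha, rfl, rfl⟩
    · exact Or.inl (μ.up_left_mem hx hy h)
    · rcases hy.eq_or_lt with rfl | hy
      · exact Or.inr ⟨x, by omega, rfl, rfl⟩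
      · exact Or.inl (mem_iff_lt_rowLen.2 (hy.trans_le (μ.rowLen_anti x i (by omega))))

/-- Removes the cells `(a, μ.rowLen i - 1)` with `i ≤ a`: a lower set for every `i`, and the
single cell `(i, μ.rowLen i - 1)` when row `i` is removable. -/
def eraseCell (μ : YoungDiagram) (i : ℕ) : YoungDiagram where
  cells := μ.cells.filter fun c => ¬(i ≤ c.1 ∧ c.2 = μ.rowLen i - 1)
  isLowerSet := by
    rintro ⟨c, d⟩ ⟨x, y⟩ ⟨hx, hy⟩ hcd
    simp only [coe_filter, Set.mem_ofPred_eq, mem_cells] at hcd ⊢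
    obtain ⟨hmem, hnot⟩ := hcd
    refine ⟨μ.up_left_mem hx hy hmem, fun ⟨hix, hy'⟩ => hnot ⟨hix.trans hx, ?_⟩⟩
    have := mem_iff_lt_rowLen.1 hmem
    have := μ.rowLen_anti i c (hix.trans hx)
    omega

theorem mem_addCell {μ : YoungDiagram} {i : ℕ} (hi : i ∈ μ.addableRows) {c : ℕ × ℕ} :
    c ∈ μ.addCell i ↔ c ∈ μ ∨ c = (i, μ.rowLen i) := by
  simp only [addCell, ← mem_cells, mem_union, mem_image, mem_range]
  constructor
  · rintro (h | ⟨a, ha, rfl⟩)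
    · exact Or.inl h
    rcases (Nat.lt_succ_iff.1 ha).eq_or_lt with rfl | ha
    · exact Or.inr rfl
    have := μ.rowLen_anti a (i - 1) (by omega)
    rw [mem_addableRows] at hi
    exact Or.inl (mem_iff_lt_rowLen.2 (by omega))
  · rintro (h | rfl)
    · exact Or.inl h
    · exact Or.inr ⟨i, by omega, rfl⟩

theorem mem_eraseCell {μ : YoungDiagram} {i : ℕ} (hi : i ∈ μ.removableRows) {c : ℕ × ℕ} :
    c ∈ μ.eraseCell i ↔ c ∈ μ ∧ c ≠ (i, μ.rowLen i - 1) := by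
  obtain ⟨a, b⟩ := c
  simp only [eraseCell, ← mem_cells, mem_filter, ne_eq, Prod.mk.injEq]
  refine and_congr_right fun hab =>
    not_congr ⟨fun ⟨ha, hb⟩ => ⟨?_, hb⟩, fun ⟨ha, hb⟩ => ⟨ha.ge, hb⟩⟩
  have := mem_iff_lt_rowLen.1 hab
  have := μ.rowLen_anti (i + 1) a
  rw [mem_removableRows] at hi
  omega

theorem le_and_card_eq_add_one_iff {μ ν : YoungDiagram} :
    μ ≤ ν ∧ ν.card = μ.card + 1 ↔ ∃ c ∉ μ, ∀ x, x ∈ ν ↔ x ∈ μ ∨ x = c := by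
  constructor
  · rintro ⟨hle, hcard⟩
    have hsub := cells_subset_iff.2 hle
    have hsdiff : #(ν.cells \ μ.cells) = 1 := by
      rw [card_sdiff_of_subset hsub]
      exact (Nat.sub_eq_iff_eq_add' (card_le_card hsub)).2 hcard
    obtain ⟨c, hc⟩ := card_eq_one.1 hsdiff
    have hdiff x : x ∈ ν ∧ x ∉ μ ↔ x = c := by
      simpa only [mem_sdiff, mem_cells, mem_singleton] using Finset.ext_iff.1 hc x
    refine ⟨c, ((hdiff c).2 rfl).2, fun x => ⟨fun hx => ?_, ?_⟩⟩
    · by_cases hxμ : x ∈ μ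
      · exact Or.inl hxμ
      · exact Or.inr ((hdiff x).1 ⟨hx, hxμ⟩)
    · rintro (hx | rfl)
      · exact hle hx
      · exact ((hdiff x).2 rfl).1
  · rintro ⟨c, hc, hν⟩
    have hcells : ν.cells = insert c μ.cells := by
      ext x
      rw [mem_insert, mem_cells, mem_cells, hν, or_comm]
    refine ⟨cells_subset_iff.1 (hcells ▸ subset_insert _ _), ?_⟩
    rw [YoungDiagram.card, YoungDiagram.card, hcells, card_insert_of_notMem (by simpa using hc)]

theorem eq_rowLen_and_mem_addableRows {μ ν : YoungDiagram} {i j : ℕ} (hij : (i, j) ∉ μ)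
    (hν : ∀ x, x ∈ ν ↔ x ∈ μ ∨ x = (i, j)) : j = μ.rowLen i ∧ i ∈ μ.addableRows := by
  have hijν : (i, j) ∈ ν := (hν _).2 (Or.inr rfl)
  have hj : μ.rowLen i ≤ j := not_lt.1 (mt mem_iff_lt_rowLen.2 hij)
  have hrow : j = μ.rowLen i := by
    rcases (hν _).1 (ν.up_left_mem le_rfl hj hijν) with h | h
    · exact absurd (mem_iff_lt_rowLen.1 h) (lt_irrefl _)
    · simp only [Prod.mk.injEq] at h
      exact h.2.symm
  refine ⟨hrow, mem_addableRows.2 (or_iff_not_imp_left.2 fun hi => ?_)⟩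
  rcases (hν _).1 (ν.up_left_mem (Nat.sub_le i 1) le_rfl hijν) with h | h
  · exact hrow ▸ mem_iff_lt_rowLen.1 h
  · simp only [Prod.mk.injEq] at h
    omega

theorem rowLen_eq_and_mem_removableRows {μ ν : YoungDiagram} {i j : ℕ} (hij : (i, j) ∉ μ)
    (hν : ∀ x, x ∈ ν ↔ x ∈ μ ∨ x = (i, j)) : ν.rowLen i = j + 1 ∧ i ∈ ν.removableRows := by
  have hijν : (i, j) ∈ ν := (hν _).2 (Or.inr rfl)
  have not_mem {a b : ℕ} (hia : i ≤ a) (hjb : j ≤ b) (hne : (a, b) ≠ (i, j)) : (a, b) ∉ ν :=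
    fun h => hij (μ.up_left_mem hia hjb (((hν _).1 h).resolve_right hne))
  have hj := mem_iff_lt_rowLen.1 hijν
  have hj' := mt mem_iff_lt_rowLen.2 (not_mem le_rfl (j.le_add_right 1) (by simp))
  have hj'' := mt mem_iff_lt_rowLen.2 (not_mem (i.le_add_right 1) le_rfl (by simp))
  exact ⟨by omega, mem_removableRows.2 (by omega)⟩

def upperCovers (μ : YoungDiagram) : Finset YoungDiagram :=
  μ.addableRows.image μ.addCell

def lowerCovers (μ : YoungDiagram) : Finset YoungDiagram :=
  μ.removableRows.image μ.eraseCell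

theorem mem_upperCovers {μ ν : YoungDiagram} :
    ν ∈ μ.upperCovers ↔ μ ≤ ν ∧ ν.card = μ.card + 1 := by
  rw [upperCovers, mem_image, le_and_card_eq_add_one_iff]
  constructor
  · rintro ⟨i, hi, rfl⟩
    exact ⟨_, fun h => (mem_iff_lt_rowLen.1 h).false, fun x => mem_addCell hi⟩
  · rintro ⟨⟨i, j⟩, hij, hν⟩
    obtain ⟨rfl, hi⟩ := eq_rowLen_and_mem_addableRows hij hν
    exact ⟨i, hi, YoungDiagram.ext (Finset.ext fun x => by
      rw [mem_cells, mem_cells, mem_addCell hi, hν])⟩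

theorem mem_lowerCovers {μ ν : YoungDiagram} :
    μ ∈ ν.lowerCovers ↔ μ ≤ ν ∧ ν.card = μ.card + 1 := by
  rw [lowerCovers, mem_image, le_and_card_eq_add_one_iff]
  constructor
  · rintro ⟨i, hi, rfl⟩
    refine ⟨(i, ν.rowLen i - 1), fun h => ((mem_eraseCell hi).1 h).2 rfl, fun x => ?_⟩
    have : (i, ν.rowLen i - 1) ∈ ν := mem_iff_lt_rowLen.2 (by rw [mem_removableRows] at hi; omega)
    rw [mem_eraseCell hi]
    by_cases hx : x = (i, ν.rowLen i - 1) <;> simp [hx, this]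
  · rintro ⟨⟨i, j⟩, hij, hν⟩
    obtain ⟨hrow, hi⟩ := rowLen_eq_and_mem_removableRows hij hν
    refine ⟨i, hi, YoungDiagram.ext (Finset.ext fun x => ?_)⟩
    rw [mem_cells, mem_cells, mem_eraseCell hi, hν, hrow, Nat.add_sub_cancel]
    by_cases hx : x = (i, j) <;> simp [hx, hij]

theorem card_upperCovers_eq_card_lowerCovers_add_one (μ : YoungDiagram) :
    #μ.upperCovers = #μ.lowerCovers + 1 := by
  have hadd : Set.InjOn μ.addCell μ.addableRows := fun i hi i' hi' h => by
    have := (mem_addCell hi').1 (h ▸ (mem_addCell hi).2 (Or.inr rfl))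
    simp_all [mem_iff_lt_rowLen]
  have herase : Set.InjOn μ.eraseCell μ.removableRows := fun i hi i' hi' h => by
    have hmem : (i, μ.rowLen i - 1) ∈ μ :=
      mem_iff_lt_rowLen.2 (by rw [mem_coe, mem_removableRows] at hi; omega)
    have := mt (mem_eraseCell hi').2 (h ▸ fun h' => ((mem_eraseCell hi).1 h').2 rfl)
    simp_all
  rw [upperCovers, lowerCovers, card_image_of_injOn hadd, card_image_of_injOn herase,
    card_addableRows]

theorem card_upperCovers_inter (μ κ : YoungDiagram) (h : μ.card = κ.card) :
    #(μ.upperCovers ∩ κ.upperCovers) =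
      #(μ.lowerCovers ∩ κ.lowerCovers) + if μ = κ then 1 else 0 := by
  split_ifs with hμκ
  · rw [hμκ, inter_self, inter_self, card_upperCovers_eq_card_lowerCovers_add_one]
  · rw [add_zero]
    refine card_commonUpperCovers_eq_card_commonLowerCovers card_strictMono
      card_sup_add_card_inf hμκ h (fun ν => ?_) (fun ρ => ?_)
    · rw [mem_inter, mem_upperCovers, mem_upperCovers]
    · rw [mem_inter, mem_lowerCovers, mem_lowerCovers]

theorem sum_sq_eq_factorial {below : YoungDiagram → Finset YoungDiagram}
    (hbelow : ∀ ν μ, μ ∈ below ν ↔ μ ≤ ν ∧ ν.card = μ.card + 1) {f : YoungDiagram → ℕ}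
    (hf0 : f ⊥ = 1) (hf : ∀ ν, ν ≠ ⊥ → f ν = ∑ μ ∈ below ν, f μ)
    {level : ℕ → Finset YoungDiagram} (hlevel : ∀ m μ, μ ∈ level m ↔ μ.card = m) (m : ℕ) :
    ∑ μ ∈ level m, f μ ^ 2 = m ! := by
  have hrank : ∀ ν μ, μ ∈ below ν → ν.card = μ.card + 1 := fun ν μ h => ((hbelow ν μ).1 h).2
  have hup μ : DifferentialPoset.up YoungDiagram.card level below μ = μ.upperCovers :=
    Finset.ext fun ν => by rw [DifferentialPoset.mem_up hlevel hrank, hbelow, mem_upperCovers]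
  have hdown μ : below μ = μ.lowerCovers :=
    Finset.ext fun ν => by rw [hbelow, mem_lowerCovers]
  have hlevel0 : level 0 = {⊥} :=
    Finset.ext fun μ => by rw [hlevel, mem_singleton, card_eq_zero_iff]
  rw [DifferentialPoset.sum_level_sq hlevel hrank
    (fun μ κ h => by rw [hup, hup, hdown, hdown]; exact card_upperCovers_inter μ κ h)
    (fun ν h => hf ν (by rintro rfl; exact h.ne' card_bot)) m, hlevel0, sum_singleton, hf0,
    one_pow, mul_one]

end YoungDiagram

theorem Finset.sum_range_sub_two_mul {M : Type*} [AddCommMonoid M] (n : ℕ) (g : ℕ → M) :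
    ∑ k ∈ range (n / 2 + 1), g (n - 2 * k) =
      ∑ l ∈ (range (n + 1)).filter (fun l => l % 2 = n % 2), g l := by
  refine sum_nbij' (fun k => n - 2 * k) (fun l => (n - l) / 2) ?_ ?_ ?_ ?_ fun _ _ => rfl <;>
    intro x hx <;> simp only [mem_range, mem_filter] at hx ⊢ <;> omega

/-- Dimension sum for the coupled Young graph: for every `n`,
`Σ_{2|λ|+|μ| = n} (dimΘ (λ,μ))² = Σ_{l ≡ n mod 2, 0 ≤ l ≤ n} (n!)² / (2^{n-l} · l! · ((n-l)/2)!)`,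
where `dimΘ (λ,μ) = (1/2^{|λ|}) · (|μ|+2|λ|)!/(|λ|!·|μ|!) · f λ · f μ` and `f` is
the number of standard Young tableaux. -/
theorem stmt13
    (below : YoungDiagram → Finset YoungDiagram)
    (hbelow : ∀ ν μ, μ ∈ below ν ↔ μ ≤ ν ∧ ν.card = μ.card + 1)
    (f : YoungDiagram → ℕ)
    (hf0 : f ⊥ = 1)
    (hf : ∀ ν, ν ≠ ⊥ → f ν = ∑ μ ∈ below ν, f μ)
    (level : ℕ → Finset YoungDiagram)
    (hlevel : ∀ m lam, lam ∈ level m ↔ lam.card = m)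
    (dimΘ : YoungDiagram → YoungDiagram → ℚ)
    (hdim : ∀ l m : YoungDiagram,
      dimΘ l m = (1 / 2 ^ l.card) *
          ((Nat.factorial (m.card + 2 * l.card) : ℚ) /
            (Nat.factorial l.card * Nat.factorial m.card)) *
        (f l : ℚ) * (f m : ℚ)) :
    ∀ n : ℕ,
      (∑ k ∈ Finset.range (n / 2 + 1), ∑ l ∈ level k, ∑ m ∈ level (n - 2 * k),
          (dimΘ l m) ^ 2) =
        ∑ l ∈ (Finset.range (n + 1)).filter (fun l => l % 2 = n % 2),
          ((Nat.factorial n : ℚ)) ^ 2 /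
            (2 ^ (n - l) * Nat.factorial l * Nat.factorial ((n - l) / 2)) := by
  intro n
  have hsq m : ∑ μ ∈ level m, (f μ : ℚ) ^ 2 = m ! := by
    exact_mod_cast YoungDiagram.sum_sq_eq_factorial hbelow hf0 hf hlevel m
  rw [← sum_range_sub_two_mul n fun l => (n ! : ℚ) ^ 2 / (2 ^ (n - l) * l ! * ((n - l) / 2)!)]
  refine sum_congr rfl fun k hk => ?_
  have hk : 2 * k ≤ n := by rw [mem_range] at hk; omega
  set c : ℚ := 1 / 2 ^ k * (n ! / (k ! * (n - 2 * k)!)) with hc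
  calc ∑ l ∈ level k, ∑ m ∈ level (n - 2 * k), dimΘ l m ^ 2
      = ∑ l ∈ level k, ∑ m ∈ level (n - 2 * k), (c * f l * f m) ^ 2 := by
        refine sum_congr rfl fun l hl => sum_congr rfl fun m hm => ?_
        rw [hdim, (hlevel _ _).1 hl, (hlevel _ _).1 hm, Nat.sub_add_cancel hk]
    _ = c ^ 2 * (∑ l ∈ level k, (f l : ℚ) ^ 2) * ∑ m ∈ level (n - 2 * k), (f m : ℚ) ^ 2 := by
        rw [mul_assoc, sum_mul_sum, mul_sum]
        exact sum_congr rfl fun _ _ => by rw [mul_sum]; exact sum_congr rfl fun _ _ => by ring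
    _ = (n ! : ℚ) ^ 2 / (2 ^ (n - (n - 2 * k)) * (n - 2 * k)! * ((n - (n - 2 * k)) / 2)!) := by
        rw [hsq, hsq, Nat.sub_sub_self hk, Nat.mul_div_cancel_left k two_pos, hc]
        field_simp
        ring
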